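/- arXiv:1203.3312 — 7 statements merged into one kernel-verified Lean document; each statement's English description precedes it below -/
import Mathlib

section
/- For every integer d ≥ 2, the equation -ln(1-β) = (d+1)β/(d+1-dβ) has exactly one solution β in the open interval (0,1). -/
/-!
With `f(β) = -ln(1-β) - (D+1)β/(D+1-Dβ)` we have `f(0) = 0`, and `f'(β)` has the sign of
`β(D²β - (D²-1))`. So for `D > 1`, `f` decreases on `[0, 1 - 1/D²]`, where it is therefore negative
away from `0`, and increases on `[1 - 1/D², 1)`, where it tends to `+∞` at `1`; it thus has exactly
one zero in `(0, 1)`.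
-/

open Real Set Filter Topology

noncomputable def rootGap (D β : ℝ) : ℝ :=
  -log (1 - β) - (D + 1) * β / (D + 1 - D * β)

section
variable {D β : ℝ}

lemma add_one_sub_mul_pos (hD : 0 ≤ D) (hβ : β ≤ 1) : 0 < D + 1 - D * β := by
  nlinarith

lemma one_sub_one_div_sq_lt_one (hD : D ≠ 0) : 1 - 1 / D ^ 2 < 1 := by
  have : 0 < 1 / D ^ 2 := by positivity
  linarith

lemma one_sub_one_div_sq_nonneg (hD : 1 ≤ D) : 0 ≤ 1 - 1 / D ^ 2 := by
  have : 1 / D ^ 2 ≤ 1 := by rw [div_le_one (by positivity)]; nlinarith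
  linarith

lemma hasDerivAt_rootGap (hD : 0 ≤ D) (hβ : β < 1) :
    HasDerivAt (rootGap D)
      (β * (D ^ 2 * β - (D ^ 2 - 1)) / ((1 - β) * (D + 1 - D * β) ^ 2)) β := by
  have h1 : 0 < 1 - β := by linarith
  have h2 := add_one_sub_mul_pos hD hβ.le
  have hlog : HasDerivAt (fun β => -log (1 - β)) (1 / (1 - β)) β :=
    (((hasDerivAt_id β).const_sub 1).log h1.ne').neg.congr_deriv (by simp only [id]; ring)
  have hfrac : HasDerivAt (fun β => (D + 1) * β / (D + 1 - D * β))
      ((D + 1) ^ 2 / (D + 1 - D * β) ^ 2) β := by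
    have := ((hasDerivAt_id β).const_mul (D + 1)).div
      (((hasDerivAt_id β).const_mul D).const_sub (D + 1)) h2.ne'
    exact this.congr_deriv (by simp only [id]; ring)
  refine (hlog.sub hfrac).congr_deriv ?_
  rw [div_sub_div _ _ h1.ne' (by positivity), div_eq_div_iff (by positivity) (by positivity)]
  ring

lemma continuousOn_rootGap (hD : 0 ≤ D) : ContinuousOn (rootGap D) (Iio 1) :=
  fun _ hβ => (hasDerivAt_rootGap hD hβ).continuousAt.continuousWithinAt

@[simp] lemma rootGap_zero : rootGap D 0 = 0 := by
  simp [rootGap]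

lemma strictAntiOn_rootGap (hD : 1 < D) : StrictAntiOn (rootGap D) (Icc 0 (1 - 1 / D ^ 2)) := by
  have hc := one_sub_one_div_sq_lt_one (D := D) (by positivity)
  apply strictAntiOn_of_deriv_neg (convex_Icc _ _)
    ((continuousOn_rootGap (by linarith)).mono fun x hx => hx.2.trans_lt hc)
  intro x hx
  rw [interior_Icc] at hx
  obtain ⟨hx0, hxc⟩ := hx
  have hx1 : x < 1 := hxc.trans hc
  rw [(hasDerivAt_rootGap (by linarith) hx1).deriv]
  have : D ^ 2 * x < D ^ 2 - 1 := by
    calc D ^ 2 * x < D ^ 2 * (1 - 1 / D ^ 2) := by gcongr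
      _ = D ^ 2 - 1 := by field_simp
  have hden : 0 < (1 - x) * (D + 1 - D * x) ^ 2 :=
    mul_pos (sub_pos.2 hx1) (pow_pos (add_one_sub_mul_pos (by linarith) hx1.le) 2)
  exact div_neg_of_neg_of_pos (mul_neg_of_pos_of_neg hx0 (by linarith)) hden

lemma strictMonoOn_rootGap (hD : 1 ≤ D) : StrictMonoOn (rootGap D) (Ico (1 - 1 / D ^ 2) 1) := by
  have hc := one_sub_one_div_sq_nonneg hD
  apply strictMonoOn_of_deriv_pos (convex_Ico _ _)
    ((continuousOn_rootGap (by linarith)).mono fun x hx => hx.2)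
  intro x hx
  rw [interior_Ico] at hx
  obtain ⟨hcx, hx1⟩ := hx
  rw [(hasDerivAt_rootGap (by linarith) hx1).deriv]
  have : D ^ 2 - 1 < D ^ 2 * x := by
    calc D ^ 2 - 1 = D ^ 2 * (1 - 1 / D ^ 2) := by field_simp
      _ < D ^ 2 * x := by gcongr
  have hden : 0 < (1 - x) * (D + 1 - D * x) ^ 2 :=
    mul_pos (sub_pos.2 hx1) (pow_pos (add_one_sub_mul_pos (by linarith) hx1.le) 2)
  exact div_pos (mul_pos (hc.trans_lt hcx) (by linarith)) hden

lemma tendsto_rootGap_nhdsLT_one : Tendsto (rootGap D) (𝓝[<] 1) atTop := by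
  have hsub : Tendsto (fun β : ℝ => 1 - β) (𝓝[<] 1) (𝓝[>] 0) := by
    refine tendsto_nhdsWithin_iff.2 ⟨?_, eventually_nhdsWithin_of_forall fun β hβ => ?_⟩
    · exact tendsto_nhdsWithin_of_tendsto_nhds
        ((continuous_const.sub continuous_id).tendsto' 1 0 (sub_self 1))
    · simpa using hβ
  have hfrac : Tendsto (fun β => (D + 1) * β / (D + 1 - D * β)) (𝓝[<] 1)
      (𝓝 ((D + 1) * 1 / (D + 1 - D * 1))) := by
    refine tendsto_nhdsWithin_of_tendsto_nhds (ContinuousAt.tendsto ?_)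
    exact (by fun_prop : ContinuousAt (fun β => (D + 1) * β) 1).div (by fun_prop) (by simp)
  exact (tendsto_neg_atBot_atTop.comp (tendsto_log_nhdsGT_zero.comp hsub)).atTop_add hfrac.neg

lemma rootGap_neg (hD : 1 < D) (hβ₀ : 0 < β) (hβ : β ≤ 1 - 1 / D ^ 2) : rootGap D β < 0 := by
  simpa using strictAntiOn_rootGap hD ⟨le_rfl, one_sub_one_div_sq_nonneg hD.le⟩ ⟨hβ₀.le, hβ⟩ hβ₀

theorem existsUnique_rootGap_eq_zero (hD : 1 < D) :
    ∃! β, β ∈ Ioo 0 1 ∧ rootGap D β = 0 := by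
  set c := 1 - 1 / D ^ 2
  have hc0 : 0 < c := by
    have : 1 / D ^ 2 < 1 := by rw [div_lt_one (by positivity)]; nlinarith
    linarith
  have hc1 : c < 1 := one_sub_one_div_sq_lt_one (by positivity)
  obtain ⟨b, ⟨hcb, hb1⟩, hb⟩ : ∃ b, b ∈ Ioo c 1 ∧ 0 < rootGap D b :=
    ((eventually_mem_set.2 (Ioo_mem_nhdsLT hc1)).and
      (tendsto_rootGap_nhdsLT_one.eventually_gt_atTop 0)).exists
  obtain ⟨β, ⟨hcβ, hβb⟩, hβ⟩ := intermediate_value_Icc hcb.le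
    ((continuousOn_rootGap (by linarith)).mono fun x hx => hx.2.trans_lt hb1)
    ⟨(rootGap_neg hD hc0 le_rfl).le, hb.le⟩
  have hc_lt_root : ∀ γ ∈ Ioo 0 1, rootGap D γ = 0 → c < γ := fun γ hγ h =>
    not_le.1 fun hγc => (rootGap_neg hD hγ.1 hγc).ne h
  refine ⟨β, ⟨⟨hc0.trans_le hcβ, hβb.trans_lt hb1⟩, hβ⟩, fun γ ⟨hγ, hγ0⟩ => ?_⟩
  exact (strictMonoOn_rootGap hD.le).injOn ⟨(hc_lt_root γ hγ hγ0).le, hγ.2⟩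
    ⟨hcβ, hβb.trans_lt hb1⟩ (hγ0.trans hβ.symm)

end

/-- For every integer `d ≥ 2`, the equation `-ln(1-β) = (d+1)β/(d+1-dβ)` has exactly one
solution `β` in the open interval `(0,1)`. -/
theorem unique_root_beta (d : ℕ) (hd : 2 ≤ d) :
    ∃! β : ℝ, β ∈ Set.Ioo (0 : ℝ) 1 ∧
      -Real.log (1 - β) = ((d : ℝ) + 1) * β / ((d : ℝ) + 1 - d * β) := by
  have hD : (1 : ℝ) < d := by exact_mod_cast hd
  refine (existsUnique_congr fun β => and_congr_right fun _ => ?_).1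
    (existsUnique_rootGap_eq_zero hD)
  rw [rootGap, sub_eq_zero]
end

section
/- For every integer d ≥ 2, the unique root β_d ∈ (0,1) of the equation -ln(1-β) = (d+1)β/(d+1-dβ) satisfies β_d > 1 - e^{-d}. -/
/-- Polynomial inequality: for `2 ≤ D` and `0 ≤ t ≤ D`,
`t^3 ≤ (D-3)t² + 4(D-2)t + 12(D-1)`. -/
lemma poly_ineq (D t : ℝ) (hD : 2 ≤ D) (ht0 : 0 ≤ t) (htD : t ≤ D) :
    t^3 ≤ (D-3)*t^2 + 4*(D-2)*t + 12*(D-1) := by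
  nlinarith [mul_nonneg ht0 (sub_nonneg.2 htD), sq_nonneg (D - t), sq_nonneg t,
    mul_nonneg (mul_nonneg ht0 ht0) (sub_nonneg.2 htD), sq_nonneg (t - 3)]

/-- Degree-5 Taylor lower bound for `exp`. -/
lemma exp_taylor5 (t : ℝ) (ht : 0 ≤ t) :
    1 + t + t^2/2 + t^3/6 + t^4/24 + t^5/120 ≤ Real.exp t := by
  have h := Real.sum_le_exp_of_nonneg ht 6
  simp [Finset.sum_range_succ, Nat.factorial] at h
  linarith

/-- Key inequality: for `2 ≤ D` and `0 < t ≤ D`, `D t + D + 1 < e^t (D+1-t)`. -/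
lemma exp_key (D t : ℝ) (hD : 2 ≤ D) (ht0 : 0 < t) (htD : t ≤ D) :
    D*t + D + 1 < Real.exp t * (D + 1 - t) := by
  have h1 : (0:ℝ) < D + 1 - t := by linarith
  have hS := exp_taylor5 t ht0.le
  have hp := poly_ineq D t hD ht0.le htD
  nlinarith [mul_le_mul_of_nonneg_right hS h1.le,
    mul_nonneg (sq_nonneg t) (sub_nonneg.2 hp),
    mul_pos (pow_pos ht0 5) h1]

/-- For every integer `d ≥ 2`, the unique root `β_d ∈ (0,1)` of
`-ln(1-β) = (d+1)β/(d+1-dβ)` satisfies `β_d > 1 - e^{-d}`. -/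
theorem beta_gt_one_sub_exp_neg_d (d : ℕ) (hd : 2 ≤ d) (β : ℝ)
    (hβ : β ∈ Set.Ioo (0 : ℝ) 1)
    (hroot : -Real.log (1 - β) = ((d : ℝ) + 1) * β / ((d : ℝ) + 1 - d * β)) :
    β > 1 - Real.exp (-(d : ℝ)) := by
  obtain ⟨hβ0, hβ1⟩ := hβ
  have hD : (2:ℝ) ≤ (d:ℝ) := by exact_mod_cast hd
  have h1β : 0 < 1 - β := by linarith
  set t : ℝ := -Real.log (1 - β) with ht_def
  have ht0 : 0 < t := by
    have := Real.log_neg h1β (by linarith)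
    simp only [ht_def]; linarith
  by_contra hcon
  push_neg at hcon
  -- then exp (-d) ≤ 1 - β, so t ≤ d
  have htD : t ≤ (d:ℝ) := by
    have h2 : Real.exp (-(d:ℝ)) ≤ 1 - β := by linarith
    have := (Real.le_log_iff_exp_le h1β).2 h2
    simp only [ht_def]; linarith
  -- denominator positive
  have hden : 0 < (d:ℝ) + 1 - d * β := by nlinarith
  have heq : t * ((d:ℝ) + 1 - d * β) = ((d:ℝ) + 1) * β := by
    rw [hroot]; field_simp
  -- β = 1 - exp(-t)
  have hβt : 1 - β = Real.exp (-t) := by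
    rw [ht_def, neg_neg, Real.exp_log h1β]
  have hexp : Real.exp (-t) * Real.exp t = 1 := by
    rw [← Real.exp_add]; simp
  have key := exp_key (d:ℝ) t hD ht0 htD
  have hEpos : 0 < Real.exp t := Real.exp_pos t
  -- derive equality exp t * (d+1-t) = d*t + d + 1 : contradiction
  have hβval : β = 1 - Real.exp (-t) := by linarith
  rw [hβval] at heq
  nlinarith [heq, hexp, key, mul_pos hEpos ht0]
end

section
/- Let β_d be the unique root in (0,1) of -ln(1-β) = (d+1)β/(d+1-dβ). Then as d → ∞ (d ranging over integers), the quantity (1 - e^{-(d+1)} - β_d) · e^{2(d+1)} / (d+1)^2 converges to 1; equivalently β_d = 1 - e^{-(d+1)} - (1+o(1))(d+1)^2 e^{-2(d+1)}. -/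
open Filter Real

set_option maxHeartbeats 1000000

lemma aux_hasDeriv (x : ℝ) (hx : x ≠ 0) :
    HasDerivAt (fun y : ℝ => y - y⁻¹ - 2 * Real.log y) (1 - (-(x ^ 2)⁻¹) - 2 * x⁻¹) x :=
  ((hasDerivAt_id x).sub (hasDerivAt_inv hx)).sub ((Real.hasDerivAt_log hx).const_mul 2)

lemma aux_two_log_lt {s : ℝ} (hs : 1 < s) : 2 * Real.log s < s - s⁻¹ := by
  have h : StrictMonoOn (fun y : ℝ => y - y⁻¹ - 2 * Real.log y) (Set.Ici 1) := by
    apply strictMonoOn_of_deriv_pos (convex_Ici 1)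
    · intro x hx
      have hx1 : (1:ℝ) ≤ x := hx
      exact (aux_hasDeriv x (by linarith)).continuousAt.continuousWithinAt
    · intro x hx
      rw [interior_Ici] at hx
      have hx1 : (1:ℝ) < x := hx
      have hx0 : x ≠ 0 := by linarith
      rw [(aux_hasDeriv x hx0).deriv]
      have e : 1 - (-(x ^ 2)⁻¹) - 2 * x⁻¹ = (1 - x⁻¹) ^ 2 := by
        field_simp
        ring
      rw [e]
      have hxi : x⁻¹ < 1 := inv_lt_one_of_one_lt₀ hx1
      have : 0 < 1 - x⁻¹ := by linarith
      positivity
  have h2 := h (Set.self_mem_Ici) (show s ∈ Set.Ici (1:ℝ) from hs.le) hs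
  simp only [Real.log_one, inv_one] at h2
  linarith

lemma main_est (m E : ℝ) (hm : 15 ≤ m) (hE0 : 0 < E) (hE1 : E < 1)
    (heq : -Real.log E = (m + 1) * (1 - E) / (1 + m * E)) :
    Real.exp (-(m + 1)) < E ∧ E < Real.exp (-m) ∧
      E = Real.exp ((m + 1) ^ 2 * E / (1 + m * E) - (m + 1)) := by
  have hden : (0:ℝ) < 1 + m * E := by nlinarith
  have hL : 0 < -Real.log E := by
    have := Real.log_neg hE0 hE1; linarith
  have hmain : -Real.log E * (1 + m * E) = (m + 1) * (1 - E) := by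
    rw [heq]; field_simp
  have hlow : Real.exp (-(m + 1)) < E := by
    have h1 : -Real.log E < m + 1 := by
      rw [heq, div_lt_iff₀ hden]
      nlinarith [mul_pos (show (0:ℝ) < m + 1 by linarith) (mul_pos (show (0:ℝ) < m + 1 by linarith) hE0)]
    have h2 : -(m + 1) < Real.log E := by linarith
    calc Real.exp (-(m + 1)) < Real.exp (Real.log E) := Real.exp_lt_exp.mpr h2
      _ = E := Real.exp_log hE0
  refine ⟨hlow, ?_, ?_⟩
  · by_contra hcon
    push_neg at hcon
    have hLm : -Real.log E ≤ m := by
      have h3 : -m = Real.log (Real.exp (-m)) := (Real.log_exp _).symm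
      have h4 : Real.log (Real.exp (-m)) ≤ Real.log E :=
        (Real.log_le_log_iff (Real.exp_pos _) hE0).mpr hcon
      linarith
    rcases le_or_gt 1 (m ^ 2 * E) with hA | hA
    · -- E ≥ 1/m²; use the sqrt-log inequality
      set s := Real.sqrt E with hsdef
      have hs0 : 0 < s := Real.sqrt_pos.mpr hE0
      have hss : s * s = E := Real.mul_self_sqrt hE0.le
      have hs1 : s < 1 := by nlinarith
      have hms : 1 ≤ m * s := by nlinarith [mul_pos (show (0:ℝ) < m by linarith) hs0]
      have hsinv : 1 < s⁻¹ := one_lt_inv₀ hs0 |>.mpr hs1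
      have haux := aux_two_log_lt hsinv
      rw [inv_inv, Real.log_inv] at haux
      -- haux : 2 * (-Real.log s) < s⁻¹ - s
      have hlogE : Real.log E = 2 * Real.log s := by
        rw [← hss, Real.log_mul hs0.ne' hs0.ne']; ring
      have h2 : (-Real.log E) * s < 1 - E := by
        have e1 : (s⁻¹ - s) * s = 1 - E := by field_simp [hs0.ne']; nlinarith
        nlinarith [mul_lt_mul_of_pos_right haux hs0]
      have h3 : 1 + m * E ≤ (m + 1) * s := by
        nlinarith [mul_nonneg (sub_nonneg.mpr hms) (sub_nonneg.mpr hs1.le)]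
      have c1 := mul_le_mul_of_nonneg_left h3 hL.le
      have c2 := mul_lt_mul_of_pos_left h2 (show (0:ℝ) < m + 1 by linarith)
      have c3 : -Real.log E * ((m + 1) * s) = (m + 1) * (-Real.log E * s) := by ring
      linarith [hmain, c1, c2, c3]
    · rcases le_or_gt 1 ((m ^ 2 + m + 1) * E) with hB | hC
      · -- middle region
        have hq0 : (0:ℝ) < m ^ 2 + m + 1 := by positivity
        have hlogq : -Real.log E ≤ Real.log (m ^ 2 + m + 1) := by
          have h5 : 0 ≤ Real.log ((m ^ 2 + m + 1) * E) := Real.log_nonneg hB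
          rw [Real.log_mul hq0.ne' hE0.ne'] at h5
          linarith
        have hsq : Real.log (m ^ 2 + m + 1) < m - 1 := by
          have e1 : m ^ 2 + m + 1 ≤ (m + 1) ^ 2 := by nlinarith
          have e2 : Real.log (m ^ 2 + m + 1) ≤ Real.log ((m + 1) ^ 2) :=
            (Real.log_le_log_iff hq0 (by positivity)).mpr e1
          have e3 : Real.log ((m + 1) ^ 2) = 2 * Real.log (m + 1) := by
            rw [Real.log_pow]; push_cast; ring
          have e4 : Real.log (m + 1) = 2 * Real.log (Real.sqrt (m + 1)) := by
            rw [Real.log_sqrt (by linarith)]; ring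
          have e5 : Real.log (Real.sqrt (m + 1)) ≤ Real.sqrt (m + 1) - 1 :=
            Real.log_le_sub_one_of_pos (Real.sqrt_pos.mpr (by linarith))
          have e6 : Real.sqrt (m + 1) * Real.sqrt (m + 1) = m + 1 :=
            Real.mul_self_sqrt (by linarith)
          have e7 : 4 ≤ Real.sqrt (m + 1) := by
            nlinarith [Real.sqrt_nonneg (m + 1)]
          have e8 : 4 * Real.sqrt (m + 1) < m + 3 := by nlinarith
          linarith
        have hstep : (m - 1) * (1 + m * E) ≤ (m + 1) * (1 - E) := by nlinarith
        have hL2 : m - 1 ≤ -Real.log E := by nlinarith [hmain, hstep, hden]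
        linarith
      · -- tiny region: L > m contradicts L ≤ m
        have hstep : m * (1 + m * E) < (m + 1) * (1 - E) := by nlinarith
        have : m < -Real.log E := by nlinarith [hmain, hstep, hden]
        linarith
  · have hlog : Real.log E = (m + 1) ^ 2 * E / (1 + m * E) - (m + 1) := by
      have h6 : Real.log E = -((m + 1) * (1 - E) / (1 + m * E)) := by linarith
      rw [h6]
      field_simp
      ring
    rw [← hlog, Real.exp_log hE0]

/-- Let `β d` be the unique root in `(0,1)` of `-ln(1-β) = (d+1)β/(d+1-dβ)`.
Then `(1 - e^{-(d+1)} - β d) · e^{2(d+1)} / (d+1)^2 → 1` as `d → ∞`. -/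
theorem beta_asymptotics (β : ℕ → ℝ)
    (hβ : ∀ d : ℕ, 2 ≤ d → β d ∈ Set.Ioo (0 : ℝ) 1 ∧
      -Real.log (1 - β d) = ((d : ℝ) + 1) * β d / ((d : ℝ) + 1 - d * β d)) :
    Filter.Tendsto
      (fun d : ℕ =>
        (1 - Real.exp (-((d : ℝ) + 1)) - β d) * Real.exp (2 * ((d : ℝ) + 1)) / ((d : ℝ) + 1) ^ 2)
      Filter.atTop (nhds 1) := by
  obtain ⟨E, hEdef⟩ : ∃ E : ℕ → ℝ, E = fun d : ℕ => 1 - β d := ⟨_, rfl⟩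
  obtain ⟨t, htdef⟩ : ∃ t : ℕ → ℝ, t = fun d : ℕ => ((d : ℝ) + 1) ^ 2 * E d / (1 + (d : ℝ) * E d) :=
    ⟨_, rfl⟩
  have hkey : ∀ d : ℕ, 15 ≤ d →
      0 < E d ∧ E d < 1 ∧ Real.exp (-((d:ℝ) + 1)) < E d ∧ E d < Real.exp (-(d:ℝ)) ∧
        E d = Real.exp (t d - ((d:ℝ) + 1)) := by
    intro d hd
    obtain ⟨⟨hb0, hb1⟩, heq⟩ := hβ d (by omega)
    have hm : (15:ℝ) ≤ (d:ℝ) := by exact_mod_cast hd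
    have hE0 : 0 < E d := by simp only [hEdef]; linarith
    have hE1 : E d < 1 := by simp only [hEdef]; linarith
    
    have heq' : -Real.log (E d) = ((d:ℝ) + 1) * (1 - E d) / (1 + (d:ℝ) * E d) := by
      simp only [hEdef]
      rw [heq]
      congr 1
      · ring
      · ring
    obtain ⟨h1, h2, h3⟩ := main_est (d:ℝ) (E d) hm hE0 hE1 heq'
    exact ⟨hE0, hE1, h1, h2, by simp only [htdef]; exact h3⟩
  have hNt : Tendsto (fun d : ℕ => (d:ℝ) + 1) atTop atTop :=
    tendsto_atTop_add_const_right _ 1 tendsto_natCast_atTop_atTop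
  have hbound : Tendsto (fun d : ℕ => ((d:ℝ) + 1) ^ 2 * Real.exp (-(d:ℝ))) atTop (nhds 0) := by
    have h0 : Tendsto (fun y : ℝ => y ^ 2 * Real.exp (-y)) atTop (nhds 0) :=
      tendsto_pow_mul_exp_neg_atTop_nhds_zero 2
    have h1 := (h0.comp hNt).const_mul (Real.exp 1)
    rw [mul_zero] at h1
    refine h1.congr fun d => ?_
    simp only [Function.comp_apply]
    rw [show -(d:ℝ) = 1 + -((d:ℝ)+1) by ring, Real.exp_add]
    ring
  have ht_pos : ∀ d : ℕ, 15 ≤ d → 0 < t d := by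
    intro d hd
    obtain ⟨hE0, hE1, _, _, _⟩ := hkey d hd
    have hd0 : (0:ℝ) ≤ (d:ℝ) := Nat.cast_nonneg d
    have : 0 ≤ (d:ℝ) * E d := mul_nonneg hd0 hE0.le
    simp only [htdef]
    apply div_pos (by positivity) (by linarith)
  have ht_le : ∀ d : ℕ, 15 ≤ d → t d ≤ ((d:ℝ) + 1) ^ 2 * Real.exp (-(d:ℝ)) := by
    intro d hd
    obtain ⟨hE0, hE1, _, h4, _⟩ := hkey d hd
    have hd0 : (0:ℝ) ≤ (d:ℝ) := Nat.cast_nonneg d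
    have h6 : 0 ≤ (d:ℝ) * E d := mul_nonneg hd0 hE0.le
    have h5 : t d ≤ ((d:ℝ) + 1) ^ 2 * E d := by
      simp only [htdef]
      apply div_le_self (by positivity) (by linarith)
    have h7 : ((d:ℝ) + 1) ^ 2 * E d ≤ ((d:ℝ) + 1) ^ 2 * Real.exp (-(d:ℝ)) :=
      mul_le_mul_of_nonneg_left h4.le (by positivity)
    linarith
  have ht0 : Tendsto t atTop (nhds 0) := by
    apply squeeze_zero' (g := fun d : ℕ => ((d:ℝ) + 1) ^ 2 * Real.exp (-(d:ℝ)))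
    · filter_upwards [eventually_ge_atTop 15] with d hd using (ht_pos d hd).le
    · filter_upwards [eventually_ge_atTop 15] with d hd using ht_le d hd
    · exact hbound
  have ht0' : Tendsto t atTop (nhdsWithin 0 {(0:ℝ)}ᶜ) := by
    rw [tendsto_nhdsWithin_iff]
    refine ⟨ht0, ?_⟩
    filter_upwards [eventually_ge_atTop 15] with d hd
    simp [(ht_pos d hd).ne']
  have hslope : Tendsto (fun d : ℕ => (Real.exp (t d) - 1) / t d) atTop (nhds 1) := by
    have h1 : Tendsto (slope Real.exp 0) (nhdsWithin 0 {(0:ℝ)}ᶜ) (nhds 1) := by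
      have := hasDerivAt_iff_tendsto_slope.mp (Real.hasDerivAt_exp 0)
      rwa [Real.exp_zero] at this
    refine (h1.comp ht0').congr fun d => ?_
    simp [Function.comp_apply, slope_def_field, Real.exp_zero]
  have hexpT : Tendsto (fun d : ℕ => Real.exp (t d)) atTop (nhds 1) := by
    have := (Real.continuous_exp.tendsto 0).comp ht0
    rwa [Real.exp_zero] at this
  have hdE : Tendsto (fun d : ℕ => (d:ℝ) * E d) atTop (nhds 0) := by
    apply squeeze_zero' (g := fun d : ℕ => ((d:ℝ) + 1) ^ 2 * Real.exp (-(d:ℝ)))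
    · filter_upwards [eventually_ge_atTop 15] with d hd
      obtain ⟨hE0, _, _, _, _⟩ := hkey d hd
      have hd0 : (0:ℝ) ≤ (d:ℝ) := Nat.cast_nonneg d
      exact mul_nonneg hd0 hE0.le
    · filter_upwards [eventually_ge_atTop 15] with d hd
      obtain ⟨hE0, hE1, _, h4, _⟩ := hkey d hd
      have hd0 : (0:ℝ) ≤ (d:ℝ) := Nat.cast_nonneg d
      have h6 : (d:ℝ) * E d ≤ (d:ℝ) * Real.exp (-(d:ℝ)) :=
        mul_le_mul_of_nonneg_left h4.le hd0
      have h7 : (d:ℝ) * Real.exp (-(d:ℝ)) ≤ ((d:ℝ) + 1) ^ 2 * Real.exp (-(d:ℝ)) := by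
        have : (d:ℝ) ≤ ((d:ℝ) + 1) ^ 2 := by nlinarith
        exact mul_le_mul_of_nonneg_right this (Real.exp_pos _).le
      linarith
    · exact hbound
  have hG : Tendsto (fun d : ℕ => Real.exp (t d) / (1 + (d:ℝ) * E d)) atTop (nhds 1) := by
    have hden : Tendsto (fun d : ℕ => 1 + (d:ℝ) * E d) atTop (nhds 1) := by
      have h8 := (tendsto_const_nhds (x := (1:ℝ)) (f := atTop (α := ℕ))).add hdE
      rwa [add_zero] at h8
    have h9 := hexpT.div hden one_ne_zero
    rwa [div_one] at h9
  have hfinal := hslope.mul hG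
  rw [mul_one] at hfinal
  refine hfinal.congr' ?_
  filter_upwards [eventually_ge_atTop 15] with d hd
  obtain ⟨hE0, hE1, h3, h4, h5⟩ := hkey d hd
  have hd0 : (0:ℝ) ≤ (d:ℝ) := Nat.cast_nonneg d
  have hden : (0:ℝ) < 1 + (d:ℝ) * E d := by nlinarith
  have htne : t d ≠ 0 := (ht_pos d hd).ne'
  have hN0 : (0:ℝ) < (d:ℝ) + 1 := by positivity
  have hexp_t : Real.exp (t d) = E d * Real.exp ((d:ℝ) + 1) := by
    rw [h5, ← Real.exp_add]
    congr 1
    ring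
  have ht_def : t d * (1 + (d:ℝ) * E d) = ((d:ℝ) + 1) ^ 2 * E d := by
    simp only [htdef]
    field_simp
  have hEexp : E d = Real.exp (t d) * Real.exp (-((d:ℝ) + 1)) := by
    rw [h5, ← Real.exp_add]
    congr 1
  have hFd : 1 - Real.exp (-((d:ℝ) + 1)) - β d = (Real.exp (t d) - 1) * Real.exp (-((d:ℝ) + 1)) := by
    have hb : β d = 1 - E d := by simp only [hEdef]; ring
    rw [hb, hEexp]
    ring
  have hstep1 : Real.exp (t d) / (1 + (d:ℝ) * E d) = t d * Real.exp ((d:ℝ) + 1) / ((d:ℝ) + 1) ^ 2 := by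
    rw [hexp_t, div_eq_div_iff hden.ne' (show ((d:ℝ) + 1) ^ 2 ≠ 0 by positivity)]
    linear_combination (-Real.exp ((d:ℝ) + 1)) * ht_def
  have hAA : Real.exp (-((d:ℝ) + 1)) * Real.exp (2 * ((d:ℝ) + 1)) = Real.exp ((d:ℝ) + 1) := by
    rw [← Real.exp_add]
    congr 1
    ring
  have hR : (Real.exp (t d) - 1) * Real.exp (-((d:ℝ) + 1)) * Real.exp (2 * ((d:ℝ) + 1)) /
      ((d:ℝ) + 1) ^ 2 = (Real.exp (t d) - 1) * Real.exp ((d:ℝ) + 1) / ((d:ℝ) + 1) ^ 2 := by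
    rw [mul_assoc, hAA]
  rw [hFd, hstep1, hR, div_mul_div_comm,
    show (Real.exp (t d) - 1) * (t d * Real.exp ((d:ℝ) + 1)) =
      t d * ((Real.exp (t d) - 1) * Real.exp ((d:ℝ) + 1)) from by ring,
    mul_div_mul_left _ _ htne]
end

section
/- For every integer d ≥ 2 there exists a real number c_coll > 0 such that: (i) for every c with 0 < c < c_coll, the only solution t ∈ [0,1] of 1 - exp(-c·t^d) = t is t = 0; and (ii) for every c > c_coll there are exactly two solutions t ∈ (0,1) of 1 - exp(-c·t^d) = t. -/
/-!
For `t ∈ (0, 1)`, `t` is a fixed point of `g_{c,d}` iff `c = H(t) := -log (1 - t) / t ^ d`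
(`fixedParam`). The derivative of `H` has the sign of `φ(t) = t / (1 - t) + d log (1 - t)`, which
vanishes at `0`, decreases on `[0, 1 - 1/d]` and then increases to positive values, so it changes
sign exactly once, at some `t₀`. Hence `H` decreases on `(0, t₀]`, increases on `[t₀, 1)` and tends
to `+∞` at both ends (at `0` because `d ≥ 2`): `c_coll = H(t₀)` is its minimum, and every larger
value is taken exactly twice.
-/

open Real Set Filter Topology

section Valley

variable {f : ℝ → ℝ} {a m b c : ℝ}

lemma exists_mem_Ioo_eq_of_tendsto_nhdsLT (hmb : m < b) (hf : ContinuousOn f (Ico m b))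
    (hlim : Tendsto f (𝓝[<] b) atTop) (hc : f m < c) : ∃ x ∈ Ioo m b, f x = c := by
  obtain ⟨y, hyc, hy⟩ := ((hlim.eventually_gt_atTop c).and (Ioo_mem_nhdsLT hmb)).exists
  obtain ⟨x, hx, hfx⟩ :=
    intermediate_value_Ioo hy.1.le (hf.mono (Icc_subset_Ico_right hy.2)) ⟨hc, hyc⟩
  exact ⟨x, ⟨hx.1, hx.2.trans hy.2⟩, hfx⟩

lemma exists_mem_Ioo_eq_of_tendsto_nhdsGT (ham : a < m) (hf : ContinuousOn f (Ioc a m))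
    (hlim : Tendsto f (𝓝[>] a) atTop) (hc : f m < c) : ∃ x ∈ Ioo a m, f x = c := by
  obtain ⟨y, hyc, hy⟩ := ((hlim.eventually_gt_atTop c).and (Ioo_mem_nhdsGT ham)).exists
  obtain ⟨x, hx, hfx⟩ :=
    intermediate_value_Ioo' hy.2.le (hf.mono (Icc_subset_Ioc_left hy.1)) ⟨hc, hyc⟩
  exact ⟨x, ⟨hy.1.trans hx.1, hx.2⟩, hfx⟩

lemma le_of_strictAntiOn_of_strictMonoOn (hanti : StrictAntiOn f (Ioc a m))
    (hmono : StrictMonoOn f (Ico m b)) {x : ℝ} (hx : x ∈ Ioo a b) : f m ≤ f x := by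
  rcases le_or_gt x m with hxm | hmx
  · exact hanti.antitoneOn ⟨hx.1, hxm⟩ ⟨hx.1.trans_le hxm, le_rfl⟩ hxm
  · exact hmono.monotoneOn ⟨le_rfl, hmx.trans hx.2⟩ ⟨hmx.le, hx.2⟩ hmx.le

lemma exists_two_preimages_of_strictAntiOn_of_strictMonoOn (hanti : StrictAntiOn f (Ioc a m))
    (hmono : StrictMonoOn f (Ico m b)) (ham : a < m) (hmb : m < b)
    (hf : ContinuousOn f (Ioo a b)) (hleft : Tendsto f (𝓝[>] a) atTop)
    (hright : Tendsto f (𝓝[<] b) atTop) (hc : f m < c) :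
    ∃ x y, x ∈ Ioo a m ∧ y ∈ Ioo m b ∧ f x = c ∧ f y = c ∧
      ∀ z ∈ Ioo a b, f z = c → z = x ∨ z = y := by
  obtain ⟨x, hx, hfx⟩ := exists_mem_Ioo_eq_of_tendsto_nhdsGT ham
    (hf.mono fun z hz ↦ ⟨hz.1, hz.2.trans_lt hmb⟩) hleft hc
  obtain ⟨y, hy, hfy⟩ := exists_mem_Ioo_eq_of_tendsto_nhdsLT hmb
    (hf.mono fun z hz ↦ ⟨ham.trans_le hz.1, hz.2⟩) hright hc
  refine ⟨x, y, hx, hy, hfx, hfy, fun z hz hfz ↦ ?_⟩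
  rcases lt_trichotomy z m with hzm | rfl | hmz
  · exact .inl <| hanti.injOn ⟨hz.1, hzm.le⟩ ⟨hx.1, hx.2.le⟩ (hfz.trans hfx.symm)
  · exact absurd hfz hc.ne
  · exact .inr <| hmono.injOn ⟨hmz.le, hz.2⟩ ⟨hy.1.le, hy.2⟩ (hfz.trans hfy.symm)

end Valley

noncomputable def fixedParam (d : ℕ) (t : ℝ) : ℝ := -log (1 - t) / t ^ d

noncomputable def fixedParamDerivNum (d : ℕ) (t : ℝ) : ℝ := t / (1 - t) + d * log (1 - t)

section
variable {d : ℕ} {x c : ℝ}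

lemma fixedParamDerivNum_zero : fixedParamDerivNum d 0 = 0 := by
  simp [fixedParamDerivNum]

lemma hasDerivAt_log_one_sub (hx : x < 1) :
    HasDerivAt (fun t ↦ log (1 - t)) (-1 / (1 - x)) x := by
  simpa using ((hasDerivAt_id' x).const_sub 1).log (by linarith)

lemma hasDerivAt_fixedParamDerivNum (hx : x < 1) :
    HasDerivAt (fixedParamDerivNum d) ((1 - d * (1 - x)) / (1 - x) ^ 2) x := by
  have hx' : 1 - x ≠ 0 := by linarith
  have := ((hasDerivAt_id' x).div ((hasDerivAt_id' x).const_sub 1) hx').add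
    ((hasDerivAt_log_one_sub hx).const_mul (d : ℝ))
  refine this.congr_deriv ?_
  field_simp
  ring

lemma hasDerivAt_fixedParam (hx0 : 0 < x) (hx1 : x < 1) :
    HasDerivAt (fixedParam d) (fixedParamDerivNum d x / x ^ (d + 1)) x := by
  have hx' : 1 - x ≠ 0 := by linarith
  have := (hasDerivAt_log_one_sub hx1).neg.div (hasDerivAt_pow d x) (pow_ne_zero d hx0.ne')
  refine this.congr_deriv ?_
  simp only [fixedParamDerivNum, Pi.neg_apply]
  rcases d with _ | d
  · field_simp
    simp
  · simp only [Nat.add_sub_cancel]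
    field_simp
    ring

lemma continuousOn_fixedParamDerivNum : ContinuousOn (fixedParamDerivNum d) (Iio 1) :=
  fun _ hx ↦ (hasDerivAt_fixedParamDerivNum hx).continuousAt.continuousWithinAt

lemma continuousOn_fixedParam : ContinuousOn (fixedParam d) (Ioo 0 1) :=
  fun _ hx ↦ (hasDerivAt_fixedParam hx.1 hx.2).continuousAt.continuousWithinAt

lemma strictAntiOn_fixedParamDerivNum (hd : 0 < d) :
    StrictAntiOn (fixedParamDerivNum d) (Icc 0 (1 - 1 / d)) := by
  have hd' : (0 : ℝ) < d := by exact_mod_cast hd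
  have hd'' : 0 < 1 / (d : ℝ) := by positivity
  refine strictAntiOn_of_deriv_neg (convex_Icc _ _)
    (continuousOn_fixedParamDerivNum.mono fun x hx ↦ hx.2.trans_lt (by linarith)) fun x hx ↦ ?_
  rw [interior_Icc] at hx
  have hx1 : 1 / (d : ℝ) < 1 - x := by linarith [hx.2]
  have : 1 < d * (1 - x) := by rwa [div_lt_iff₀' hd'] at hx1
  rw [(hasDerivAt_fixedParamDerivNum (by linarith)).deriv]
  exact div_neg_of_neg_of_pos (by linarith) (pow_pos (by linarith) 2)

lemma strictMonoOn_fixedParamDerivNum (hd : 0 < d) :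
    StrictMonoOn (fixedParamDerivNum d) (Ico (1 - 1 / d) 1) := by
  have hd' : (0 : ℝ) < d := by exact_mod_cast hd
  refine strictMonoOn_of_deriv_pos (convex_Ico _ _)
    (continuousOn_fixedParamDerivNum.mono fun x hx ↦ hx.2) fun x hx ↦ ?_
  rw [interior_Ico] at hx
  have hx1 : 1 - x < 1 / (d : ℝ) := by linarith [hx.1]
  have : d * (1 - x) < 1 := by rwa [lt_div_iff₀' hd'] at hx1
  rw [(hasDerivAt_fixedParamDerivNum hx.2).deriv]
  exact div_pos (by linarith) (pow_pos (by linarith [hx.2]) 2)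

lemma fixedParamDerivNum_pos_near_one (hd : 0 < d) :
    0 < fixedParamDerivNum d (1 - 1 / (2 * (d : ℝ)) ^ 2) := by
  have hd' : (1 : ℝ) ≤ d := by exact_mod_cast hd
  have hlog : log (2 * d) ≤ 2 * d - 1 := log_le_sub_one_of_pos (by positivity)
  have hs : (1 : ℝ) - (1 - 1 / (2 * (d : ℝ)) ^ 2) = ((2 * d : ℝ) ^ 2)⁻¹ := by ring
  rw [fixedParamDerivNum, hs, log_inv, log_pow]
  field_simp
  push_cast
  nlinarith

lemma exists_fixedParamDerivNum_sign_change (hd : 2 ≤ d) :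
    ∃ t₀ ∈ Ioo (0 : ℝ) 1, (∀ u ∈ Ioo 0 t₀, fixedParamDerivNum d u < 0) ∧
      ∀ u ∈ Ioo t₀ 1, 0 < fixedParamDerivNum d u := by
  have hd₀ : 0 < d := by omega
  have hd' : (2 : ℝ) ≤ d := by exact_mod_cast hd
  set p : ℝ := 1 - 1 / d
  set b : ℝ := 1 - 1 / (2 * (d : ℝ)) ^ 2
  have hp : 0 < p := by
    have : 1 / (d : ℝ) ≤ 1 / 2 := one_div_le_one_div_of_le two_pos hd'
    linarith
  have hpb : p < b := by
    have : 1 / (2 * (d : ℝ)) ^ 2 < 1 / d :=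
      one_div_lt_one_div_of_lt (by positivity) (by nlinarith)
    linarith
  have hb : b < 1 := by
    have : 0 < 1 / (2 * (d : ℝ)) ^ 2 := by positivity
    linarith
  have hmono := strictMonoOn_fixedParamDerivNum hd₀
  have hneg_p : ∀ u ∈ Ioc 0 p, fixedParamDerivNum d u < 0 := fun u hu ↦
    fixedParamDerivNum_zero (d := d) ▸
      strictAntiOn_fixedParamDerivNum hd₀ ⟨le_rfl, hp.le⟩ ⟨hu.1.le, hu.2⟩ hu.1
  obtain ⟨t₀, ⟨hpt₀, ht₀b⟩, hφt₀⟩ := intermediate_value_Ioo hpb.le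
    (continuousOn_fixedParamDerivNum.mono fun x hx ↦ hx.2.trans_lt hb)
    ⟨hneg_p p ⟨hp, le_rfl⟩, fixedParamDerivNum_pos_near_one hd₀⟩
  have ht₀ : t₀ ∈ Ico p 1 := ⟨hpt₀.le, ht₀b.trans hb⟩
  refine ⟨t₀, ⟨hp.trans hpt₀, ht₀.2⟩, fun u hu ↦ ?_, fun u hu ↦ ?_⟩
  · rcases le_or_gt u p with hup | hpu
    · exact hneg_p u ⟨hu.1, hup⟩
    · exact hφt₀ ▸ hmono ⟨hpu.le, hu.2.trans ht₀.2⟩ ht₀ hu.2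
  · exact hφt₀ ▸ hmono ht₀ ⟨ht₀.1.trans hu.1.le, hu.2⟩ hu.1

lemma strictAntiOn_fixedParam {t₀ : ℝ} (ht₀ : t₀ < 1)
    (hneg : ∀ u ∈ Ioo 0 t₀, fixedParamDerivNum d u < 0) :
    StrictAntiOn (fixedParam d) (Ioc 0 t₀) := by
  refine strictAntiOn_of_deriv_neg (convex_Ioc _ _)
    (continuousOn_fixedParam.mono fun x hx ↦ ⟨hx.1, hx.2.trans_lt ht₀⟩) fun x hx ↦ ?_
  rw [interior_Ioc] at hx
  rw [(hasDerivAt_fixedParam hx.1 (hx.2.trans ht₀)).deriv]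
  exact div_neg_of_neg_of_pos (hneg x hx) (pow_pos hx.1 _)

lemma strictMonoOn_fixedParam {t₀ : ℝ} (ht₀ : 0 < t₀)
    (hpos : ∀ u ∈ Ioo t₀ 1, 0 < fixedParamDerivNum d u) :
    StrictMonoOn (fixedParam d) (Ico t₀ 1) := by
  refine strictMonoOn_of_deriv_pos (convex_Ico _ _)
    (continuousOn_fixedParam.mono fun x hx ↦ ⟨ht₀.trans_le hx.1, hx.2⟩) fun x hx ↦ ?_
  rw [interior_Ico] at hx
  rw [(hasDerivAt_fixedParam (ht₀.trans hx.1) hx.2).deriv]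
  exact div_pos (hpos x hx) (pow_pos (ht₀.trans hx.1) _)

lemma inv_le_fixedParam (hd : 2 ≤ d) (hx0 : 0 < x) (hx1 : x < 1) : x⁻¹ ≤ fixedParam d x := by
  have hlog : x ≤ -log (1 - x) := by linarith [log_le_sub_one_of_pos (by linarith : 0 < 1 - x)]
  have hpow : x ^ d ≤ x ^ 2 := pow_le_pow_of_le_one hx0.le hx1.le hd
  calc x⁻¹ = x / x ^ 2 := by field_simp
    _ ≤ x / x ^ d := by gcongr
    _ ≤ fixedParam d x := by unfold fixedParam; gcongr

lemma neg_log_one_sub_le_fixedParam (hx0 : 0 < x) (hx1 : x < 1) :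
    -log (1 - x) ≤ fixedParam d x := by
  have hlog : 0 ≤ -log (1 - x) := neg_nonneg.2 (log_nonpos (by linarith) (by linarith))
  exact le_div_self hlog (pow_pos hx0 d) (pow_le_one₀ hx0.le hx1.le)

lemma tendsto_fixedParam_nhdsGT_zero (hd : 2 ≤ d) :
    Tendsto (fixedParam d) (𝓝[>] 0) atTop := by
  refine tendsto_atTop_mono' _ ?_ tendsto_inv_nhdsGT_zero
  filter_upwards [Ioo_mem_nhdsGT one_pos] with x hx using inv_le_fixedParam hd hx.1 hx.2

lemma tendsto_fixedParam_nhdsLT_one : Tendsto (fixedParam d) (𝓝[<] 1) atTop := by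
  have hsub : Tendsto (fun x : ℝ ↦ 1 - x) (𝓝[<] 1) (𝓝[>] 0) := by
    refine tendsto_nhdsWithin_of_tendsto_nhds_of_eventually_within _ ?_ ?_
    · simpa using ((continuous_sub_left (1 : ℝ)).tendsto 1).mono_left nhdsWithin_le_nhds
    · filter_upwards [self_mem_nhdsWithin] with x (hx : x < 1) using sub_pos.2 hx
  refine tendsto_atTop_mono' _ ?_
    (tendsto_neg_atBot_atTop.comp (tendsto_log_nhdsGT_zero.comp hsub))
  filter_upwards [Ioo_mem_nhdsLT one_pos] with x hx
  exact neg_log_one_sub_le_fixedParam hx.1 hx.2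

lemma fixedParam_pos (hx0 : 0 < x) (hx1 : x < 1) : 0 < fixedParam d x :=
  div_pos (neg_pos.2 (log_neg (by linarith) (by linarith))) (pow_pos hx0 d)

lemma one_sub_exp_eq_self_iff (hx0 : 0 < x) (hx1 : x < 1) :
    1 - exp (-c * x ^ d) = x ↔ fixedParam d x = c := by
  have hxd : x ^ d ≠ 0 := pow_ne_zero d hx0.ne'
  calc 1 - exp (-c * x ^ d) = x ↔ exp (-c * x ^ d) = 1 - x := by
        constructor <;> intro <;> linarith
    _ ↔ -c * x ^ d = log (1 - x) := by
      constructor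
      · intro h; rw [← h, log_exp]
      · intro h; rw [h, exp_log (by linarith)]
    _ ↔ fixedParam d x = c := by
      rw [fixedParam, div_eq_iff hxd]; constructor <;> intro <;> linarith

end

/-- For every integer `d ≥ 2` there exists `c_coll > 0` such that: for `0 < c < c_coll`
the only solution `t ∈ [0,1]` of `1 - exp(-c t^d) = t` is `t = 0`; and for `c > c_coll`
there are exactly two solutions `t ∈ (0,1)`. -/
theorem exists_collapse_threshold (d : ℕ) (hd : 2 ≤ d) :
    ∃ ccoll : ℝ, 0 < ccoll ∧
      (∀ c : ℝ, 0 < c → c < ccoll →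
        ∀ t ∈ Set.Icc (0 : ℝ) 1, 1 - Real.exp (-c * t ^ d) = t → t = 0) ∧
      (∀ c : ℝ, ccoll < c →
        ∃ s t : ℝ, s ∈ Set.Ioo (0 : ℝ) 1 ∧ t ∈ Set.Ioo (0 : ℝ) 1 ∧ s ≠ t ∧
          1 - Real.exp (-c * s ^ d) = s ∧ 1 - Real.exp (-c * t ^ d) = t ∧
          ∀ u ∈ Set.Ioo (0 : ℝ) 1, 1 - Real.exp (-c * u ^ d) = u → u = s ∨ u = t) := by
  obtain ⟨t₀, ht₀, hneg, hpos⟩ := exists_fixedParamDerivNum_sign_change hd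
  have hanti := strictAntiOn_fixedParam ht₀.2 hneg
  have hmono := strictMonoOn_fixedParam ht₀.1 hpos
  refine ⟨fixedParam d t₀, fixedParam_pos ht₀.1 ht₀.2, ?_, fun c hc ↦ ?_⟩
  · intro c _ hc t ht hfix
    by_contra ht0
    have ht1 : t ≠ 1 := by rintro rfl; simp at hfix
    have hmin := le_of_strictAntiOn_of_strictMonoOn hanti hmono
      ⟨ht.1.lt_of_ne' ht0, ht.2.lt_of_ne ht1⟩
    rw [(one_sub_exp_eq_self_iff (ht.1.lt_of_ne' ht0) (ht.2.lt_of_ne ht1)).1 hfix] at hmin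
    exact hmin.not_gt hc
  · obtain ⟨s, t, hs, ht, hfs, hft, huniq⟩ :=
      exists_two_preimages_of_strictAntiOn_of_strictMonoOn hanti hmono ht₀.1 ht₀.2
        continuousOn_fixedParam (tendsto_fixedParam_nhdsGT_zero hd)
        tendsto_fixedParam_nhdsLT_one hc
    have hs' : s ∈ Ioo (0 : ℝ) 1 := ⟨hs.1, hs.2.trans ht₀.2⟩
    have ht' : t ∈ Ioo (0 : ℝ) 1 := ⟨ht₀.1.trans ht.1, ht.2⟩
    refine ⟨s, t, hs', ht', (hs.2.trans ht.1).ne, (one_sub_exp_eq_self_iff hs'.1 hs'.2).2 hfs,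
      (one_sub_exp_eq_self_iff ht'.1 ht'.2).2 hft, fun u hu hfu ↦ ?_⟩
    exact huniq u hu ((one_sub_exp_eq_self_iff hu.1 hu.2).1 hfu)
end

section
/- For every integer d ≥ 2, there exists a unique pair (c, t) with c > 0 and t ∈ (0,1) such that 1 - exp(-c·t^d) = t and c·d·t^{d-1}·exp(-c·t^d) = 1; i.e., there is a unique parameter c at which the graph of g_{c,d} is tangent to the diagonal at a point of (0,1). -/
/-!
Put `s = c t^d`. The condition `g_{c,d}(t) = t` reads `e^{-s} = 1 - t`, and then
`g'_{c,d}(t) = 1` becomes `e^s - 1 = d s`. So tangencies correspond bijectively to positive roots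
of `e^s - 1 = d s`, via `t = 1 - e^{-s}`, `c = s / t^d`. Such a root is unique because
`(e^s - 1) / s` is the secant slope of the strictly convex `exp` from `0`, hence strictly
increasing; it exists because this slope is below `d` at `s = 1 - 1/d` and above `d` at `s = 2d`.
-/

open Real Set

theorem strictMonoOn_exp_sub_one_div : StrictMonoOn (fun s : ℝ => (exp s - 1) / s) (Ioi 0) :=
  fun x hx y hy hxy => by
    simpa using strictConvexOn_exp.secant_strict_mono (a := 0) trivial trivial trivial
      hx.ne' (ne_of_gt hy) hxy

theorem exp_sub_one_div_lt_one_div_one_sub {s : ℝ} (hs₀ : 0 < s) (hs₁ : s < 1) :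
    (exp s - 1) / s < 1 / (1 - s) := by
  have h1s : 0 < 1 - s := by linarith
  rw [div_lt_iff₀ hs₀, show 1 / (1 - s) * s = 1 / (1 - s) - 1 by field_simp; ring]
  linarith [exp_bound_div_one_sub_of_interval' hs₀ hs₁]

theorem one_add_half_le_exp_sub_one_div {s : ℝ} (hs : 0 < s) : 1 + s / 2 ≤ (exp s - 1) / s := by
  rw [le_div_iff₀ hs]
  nlinarith [quadratic_le_exp_of_nonneg hs.le]

theorem existsUnique_pos_exp_sub_one_eq_mul {a : ℝ} (ha : 1 < a) :
    ∃! s : ℝ, 0 < s ∧ exp s - 1 = a * s := by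
  have ha₀ : 0 < a := by linarith
  have hs₀ : 0 < 1 - a⁻¹ := by simpa using inv_lt_one_of_one_lt₀ ha
  have hlow : (exp (1 - a⁻¹) - 1) / (1 - a⁻¹) < a := by
    simpa using exp_sub_one_div_lt_one_div_one_sub hs₀ (by simpa using ha₀)
  have hhigh : a < (exp (2 * a) - 1) / (2 * a) := by
    linarith [one_add_half_le_exp_sub_one_div (by positivity : 0 < 2 * a)]
  have hcont : ContinuousOn (fun s : ℝ => (exp s - 1) / s) (Icc (1 - a⁻¹) (2 * a)) :=
    (continuous_exp.sub continuous_const).continuousOn.div continuousOn_id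
      fun s hs => (hs₀.trans_le hs.1).ne'
  obtain ⟨s, hs, hslope⟩ :=
    intermediate_value_Ioo (by nlinarith [inv_pos.2 ha₀]) hcont ⟨hlow, hhigh⟩
  have hspos : 0 < s := hs₀.trans hs.1
  refine ⟨s, ⟨hspos, by simpa [div_eq_iff hspos.ne'] using hslope⟩, ?_⟩
  rintro s' ⟨hs'pos, hs'⟩
  refine strictMonoOn_exp_sub_one_div.injOn hs'pos hspos ?_
  simp only [hs', hslope, mul_div_cancel_right₀ _ hs'pos.ne']

/-- `g_{c,d}(t) = t` and `g'_{c,d}(t) = 1` at `(c, t) = p`, with `c > 0` and `t ∈ (0, 1)`. -/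
def IsTangency (d : ℕ) (p : ℝ × ℝ) : Prop :=
  0 < p.1 ∧ p.2 ∈ Ioo (0 : ℝ) 1 ∧ 1 - exp (-p.1 * p.2 ^ d) = p.2 ∧
    p.1 * d * p.2 ^ (d - 1) * exp (-p.1 * p.2 ^ d) = 1

noncomputable def tangencyPoint (d : ℕ) (s : ℝ) : ℝ × ℝ :=
  (s / (1 - exp (-s)) ^ d, 1 - exp (-s))

theorem mul_pow_pred_mul_exp_eq_one_iff {d : ℕ} (hd : 1 ≤ d) {c t s : ℝ} (ht : t ∈ Ioo 0 1)
    (hs : c * t ^ d = s) (hexp : exp (-s) = 1 - t) :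
    c * d * t ^ (d - 1) * exp (-s) = 1 ↔ exp s - 1 = d * s := by
  set k := c * d * t ^ (d - 1)
  have hks : d * s = k * t := by
    rw [← hs, mul_assoc, ← pow_succ, Nat.sub_add_cancel hd]; ring
  have h1t : 1 - t ≠ 0 := by linarith [ht.2]
  have hfactor : exp s - 1 - k * t = t * (1 - t)⁻¹ * (1 - k * (1 - t)) := by
    rw [show exp s = (1 - t)⁻¹ by rw [← hexp, exp_neg, inv_inv]]; field_simp; ring
  rw [hks, ← sub_eq_zero (a := exp s - 1), hfactor, hexp, eq_comm, ← sub_eq_zero (a := 1)]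
  simp [ht.1.ne', h1t]

theorem isTangency_tangencyPoint {d : ℕ} (hd : 1 ≤ d) {s : ℝ} (hs : 0 < s)
    (hroot : exp s - 1 = d * s) : IsTangency d (tangencyPoint d s) := by
  have ht : 1 - exp (-s) ∈ Ioo (0 : ℝ) 1 :=
    ⟨by simpa using exp_lt_one_iff.2 (neg_lt_zero.2 hs), by simpa using exp_pos (-s)⟩
  have hct : s / (1 - exp (-s)) ^ d * (1 - exp (-s)) ^ d = s :=
    div_mul_cancel₀ s (pow_ne_zero d ht.1.ne')
  refine ⟨div_pos hs (pow_pos ht.1 d), ht, ?_, ?_⟩ <;> dsimp only [tangencyPoint] <;>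
    rw [neg_mul, hct]
  exact (mul_pow_pred_mul_exp_eq_one_iff hd ht hct (by ring)).2 hroot

theorem IsTangency.exp_neg_eq {d : ℕ} {p : ℝ × ℝ} (h : IsTangency d p) :
    exp (-(p.1 * p.2 ^ d)) = 1 - p.2 := by
  rw [← neg_mul]; linarith [h.2.2.1]

theorem IsTangency.exp_sub_one_eq {d : ℕ} (hd : 1 ≤ d) {p : ℝ × ℝ} (h : IsTangency d p) :
    0 < p.1 * p.2 ^ d ∧ exp (p.1 * p.2 ^ d) - 1 = d * (p.1 * p.2 ^ d) := by
  have hexp := h.exp_neg_eq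
  obtain ⟨hc, ht, -, hslope⟩ := h
  rw [neg_mul] at hslope
  exact ⟨mul_pos hc (pow_pos ht.1 d), (mul_pow_pred_mul_exp_eq_one_iff hd ht rfl hexp).1 hslope⟩

theorem IsTangency.eq_tangencyPoint {d : ℕ} {p : ℝ × ℝ} (h : IsTangency d p) :
    p = tangencyPoint d (p.1 * p.2 ^ d) := by
  rw [tangencyPoint, h.exp_neg_eq, sub_sub_cancel,
    mul_div_cancel_right₀ _ (pow_ne_zero d h.2.1.1.ne')]

/-- For every integer `d ≥ 2`, there exists a unique pair `(c, t)` with `c > 0` and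
`t ∈ (0,1)` such that `1 - exp(-c t^d) = t` and `c d t^{d-1} exp(-c t^d) = 1`, i.e. a
unique parameter `c` at which the graph of `g_{c,d}` is tangent to the diagonal at a
point of `(0,1)`. -/
theorem unique_tangency (d : ℕ) (hd : 2 ≤ d) :
    ∃! p : ℝ × ℝ, 0 < p.1 ∧ p.2 ∈ Set.Ioo (0 : ℝ) 1 ∧
      1 - Real.exp (-p.1 * p.2 ^ d) = p.2 ∧
      p.1 * d * p.2 ^ (d - 1) * Real.exp (-p.1 * p.2 ^ d) = 1 := by
  have hd₁ : 1 ≤ d := by omega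
  obtain ⟨s, ⟨hs, hroot⟩, huniq⟩ :=
    existsUnique_pos_exp_sub_one_eq_mul (a := d) (by norm_cast)
  refine ⟨tangencyPoint d s, isTangency_tangencyPoint hd₁ hs hroot, fun p hp => ?_⟩
  rw [IsTangency.eq_tangencyPoint hp, huniq _ (IsTangency.exp_sub_one_eq hd₁ hp)]
end

section
/- For every integer d ≥ 1 and reals 0 < c ≤ c', the largest fixed point of g_{c,d} in [0,1] is at most the largest fixed point of g_{c',d} in [0,1]; that is, sup{ t ∈ [0,1] : 1 - exp(-c·t^d) = t } ≤ sup{ t ∈ [0,1] : 1 - exp(-c'·t^d) = t }. -/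
/-- For every integer `d ≥ 1` and reals `0 < c ≤ c'`, the largest fixed point of
`g_{c,d}` in `[0,1]` is at most the largest fixed point of `g_{c',d}` in `[0,1]`. -/
theorem largest_fixed_point_mono (d : ℕ) (hd : 1 ≤ d) (c c' : ℝ) (hc : 0 < c)
    (hcc' : c ≤ c') :
    sSup {t : ℝ | t ∈ Set.Icc (0 : ℝ) 1 ∧ 1 - Real.exp (-c * t ^ d) = t} ≤
      sSup {t : ℝ | t ∈ Set.Icc (0 : ℝ) 1 ∧ 1 - Real.exp (-c' * t ^ d) = t} := by
  set S' : Set ℝ := {t : ℝ | t ∈ Set.Icc (0 : ℝ) 1 ∧ 1 - Real.exp (-c' * t ^ d) = t}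
  have hbdd : BddAbove S' := ⟨1, fun x hx => hx.1.2⟩
  have h0 : (0 : ℝ) ∈ S' := by
    constructor
    · exact Set.left_mem_Icc.mpr zero_le_one
    · simp [zero_pow (by omega : d ≠ 0)]
  apply Real.sSup_le _ (le_csSup hbdd h0)
  rintro t ⟨⟨ht0, ht1⟩, hft⟩
  -- IVT: f x = 1 - exp(-c' x^d) - x has f t ≥ 0, f 1 ≤ 0
  set f : ℝ → ℝ := fun x => 1 - Real.exp (-c' * x ^ d) - x with hf
  have hcont : ContinuousOn f (Set.Icc t 1) := by
    apply Continuous.continuousOn; continuity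
  have hft0 : 0 ≤ f t := by
    have : f t = Real.exp (-c * t ^ d) - Real.exp (-c' * t ^ d) := by
      simp only [hf]; linarith
    rw [this, sub_nonneg]
    apply Real.exp_le_exp.mpr
    have : 0 ≤ t ^ d := pow_nonneg ht0 d
    nlinarith
  have hf1 : f 1 ≤ 0 := by
    simp only [hf, one_pow, mul_one]
    have := Real.exp_pos (-c')
    linarith
  obtain ⟨x, hx, hfx⟩ := intermediate_value_Icc' ht1 hcont (Set.mem_Icc.mpr ⟨hf1, hft0⟩)
  have hxS : x ∈ S' := by
    refine ⟨⟨le_trans ht0 hx.1, hx.2⟩, ?_⟩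
    simp only [hf] at hfx
    linarith
  exact le_trans hx.1 (le_csSup hbdd hxS)
end

section
/- Let d ≥ 2 be an integer and c > 0 a real. If s, t ∈ (0,1) satisfy s < t, 1 - exp(-c·s^d) = s and 1 - exp(-c·t^d) = t (i.e., s is the smaller of two fixed points of g_{c,d} in (0,1)), then s < 1 - e^{-d}. -/
/-!
Write a fixed point `x` of `g_{c,d}` through `L = c x^d`, so that `x = 1 - e^{-L}`; taking logarithms
of `L = c x^d` gives `d log (1 - e^{-L}) - log L = -log c`. Hence the parameters `L_s < L_t` of the two
fixed points are two solutions of `F(L) = -log c` for `F(L) = d log (1 - e^{-L}) - log L`. But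
`F'(L) < 0` as soon as `d L < e^L - 1`, which holds for `L ≥ d` since `L^2 < e^L - 1`; so `F` is
injective on `[d, ∞)`, forcing `L_s < d`, i.e. `s < 1 - e^{-d}`.
-/

open Real Set

lemma sq_lt_exp_sub_one {x : ℝ} (hx : 0 < x) : x ^ 2 < exp x - 1 := by
  have htaylor := sum_le_exp_of_nonneg hx.le 4
  simp only [Finset.sum_range_succ, Finset.sum_range_zero, Nat.factorial] at htaylor
  norm_num at htaylor
  nlinarith [mul_pos hx (show 0 < (x - 3 / 2) ^ 2 + 15 / 4 by positivity)]

noncomputable def fixedPointProfile (d L : ℝ) : ℝ := d * log (1 - exp (-L)) - log L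

lemma one_sub_exp_neg_pos {L : ℝ} (hL : 0 < L) : 0 < 1 - exp (-L) := by
  simpa using exp_lt_one_iff.mpr (neg_lt_zero.mpr hL)

lemma hasDerivAt_fixedPointProfile (d : ℝ) {L : ℝ} (hL : 0 < L) :
    HasDerivAt (fixedPointProfile d) (d * (exp (-L) / (1 - exp (-L))) - L⁻¹) L := by
  have hinner : HasDerivAt (fun L => 1 - exp (-L)) (exp (-L)) L := by
    simpa using ((hasDerivAt_neg L).exp).const_sub 1
  have hlog := (hinner.log (one_sub_exp_neg_pos hL).ne').const_mul d
  exact hlog.sub (hasDerivAt_log hL.ne')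

lemma fixedPointProfile_strictAntiOn {d a : ℝ} (ha : 0 < a) (hda : d ≤ a) :
    StrictAntiOn (fixedPointProfile d) (Ici a) := by
  have hcont : ContinuousOn (fixedPointProfile d) (Ici a) := fun L hL =>
    (hasDerivAt_fixedPointProfile d (ha.trans_le hL)).continuousAt.continuousWithinAt
  refine strictAntiOn_of_deriv_neg (convex_Ici a) hcont fun L hL => ?_
  rw [interior_Ici] at hL
  have hL0 : 0 < L := ha.trans hL
  rw [(hasDerivAt_fixedPointProfile d hL0).deriv, sub_neg]
  have hexp : d * L * exp (-L) < 1 - exp (-L) := by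
    have hdL : d * L < exp L - 1 :=
      (mul_le_mul_of_nonneg_right (hda.trans hL.le) hL0.le).trans_lt
        ((sq L).symm ▸ sq_lt_exp_sub_one hL0)
    have := mul_lt_mul_of_pos_right hdL (exp_pos (-L))
    rwa [sub_mul, ← exp_add, add_neg_cancel, exp_zero, one_mul] at this
  rw [← mul_div_assoc, div_lt_iff₀ (one_sub_exp_neg_pos hL0), inv_mul_eq_div, lt_div_iff₀ hL0]
  linarith

lemma fixedPointProfile_eq_neg_log {d : ℕ} {c x : ℝ} (hc : 0 < c) (hx : 0 < x)
    (hfix : 1 - exp (-c * x ^ d) = x) : fixedPointProfile d (c * x ^ d) = -log c := by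
  rw [fixedPointProfile, ← neg_mul, hfix, log_mul hc.ne' (pow_ne_zero d hx.ne'), log_pow]
  ring

theorem smaller_fixed_point_lt_general (d : ℕ) (c : ℝ) (hc : 0 < c) (s t : ℝ)
    (hs : s ∈ Set.Ioo (0 : ℝ) 1) (hst : s < t)
    (hsfix : 1 - Real.exp (-c * s ^ d) = s) (htfix : 1 - Real.exp (-c * t ^ d) = t) :
    s < 1 - Real.exp (-(d : ℝ)) := by
  by_contra! hge
  have hexp_s : exp (-(c * s ^ d)) = 1 - s := by rw [← neg_mul]; linarith
  have hexp_t : exp (-(c * t ^ d)) = 1 - t := by rw [← neg_mul]; linarith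
  have hpos : 0 < c * s ^ d := mul_pos hc (pow_pos hs.1 d)
  have hlt : c * s ^ d < c * t ^ d := by
    simpa using exp_lt_exp.mp (show exp (-(c * t ^ d)) < exp (-(c * s ^ d)) by linarith)
  have hge_d : (d : ℝ) ≤ c * s ^ d := by
    simpa using exp_le_exp.mp (show exp (-(c * s ^ d)) ≤ exp (-(d : ℝ)) by linarith)
  have hanti := fixedPointProfile_strictAntiOn hpos hge_d self_mem_Ici hlt.le hlt
  rw [fixedPointProfile_eq_neg_log hc hs.1 hsfix,
    fixedPointProfile_eq_neg_log hc (hs.1.trans hst) htfix] at hanti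
  exact lt_irrefl _ hanti

/-- Let `d ≥ 2` and `c > 0`. If `s, t ∈ (0,1)` satisfy `s < t` and both are fixed points
of `g_{c,d}`, then `s < 1 - e^{-d}`. -/
theorem smaller_fixed_point_lt (d : ℕ) (hd : 2 ≤ d) (c : ℝ) (hc : 0 < c) (s t : ℝ)
    (hs : s ∈ Set.Ioo (0 : ℝ) 1) (ht : t ∈ Set.Ioo (0 : ℝ) 1) (hst : s < t)
    (hsfix : 1 - Real.exp (-c * s ^ d) = s) (htfix : 1 - Real.exp (-c * t ^ d) = t) :
    s < 1 - Real.exp (-(d : ℝ)) :=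
  smaller_fixed_point_lt_general d c hc s t hs hst hsfix htfix
end
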